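/- arXiv:2201.07427 — 2 statements merged into one kernel-verified Lean document; each statement's English description precedes it below -/
import Mathlib

section
/- Let f : E → ℝ be convex and L-smooth with L > 0, and let f*(w) := sup_{z ∈ E} (⟨w, z⟩ − f(z)) be its convex conjugate. Let x, x₀ ∈ E and set u := ∇f(x), u₀ := ∇f(x₀). Then f*(u) and f*(u₀) are finite, and (1/(2L)) ‖u − u₀‖² ≤ f*(u) − f*(u₀) − ⟨x₀, u − u₀⟩ = f(x₀) − f(x) − ⟨∇f(x), x₀ − x⟩ ≤ (L/2) ‖x − x₀‖². -/
/-!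
A convex function lies above its tangent planes, so the supremum defining `f*(∇f x)` is attained
at `x`: `f*(∇f x) = ⟪∇f x, x⟫ - f x`. Hence the middle expression is the Bregman divergence
`D_f(x, x₀) = f x₀ - f x - ⟪∇f x, x₀ - x⟫`. Its upper bound is the descent lemma: along
`t ↦ x + t • v` the function `f (x + t • v) - t ⟪∇f x, v⟫ - (L/2) t² ‖v‖²` has nonpositive
derivative for `t ≥ 0`, by the Lipschitz bound on `∇f`. For the lower bound, evaluate the
tangent-plane inequality at `x` and the descent lemma at `x₀` at the gradient step
`x₀ - L⁻¹ • (∇f x₀ - ∇f x)`, and add them.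
-/

/-- The convex conjugate g*(u) := sup_{x} (⟨u, x⟩ − g(x)), with values in ℝ ∪ {±∞}. -/
noncomputable def conj {E : Type*} [NormedAddCommGroup E] [InnerProductSpace ℝ E]
    (g : E → ℝ) (u : E) : EReal :=
  ⨆ x : E, (((inner ℝ u x : ℝ) - g x : ℝ) : EReal)

open Set

section Bregman

variable {E : Type*} [NormedAddCommGroup E] [InnerProductSpace ℝ E]

def bregmanDiv (f : E → ℝ) (f' : E → E) (x y : E) : ℝ :=
  f y - f x - inner ℝ (f' x) (y - x)

variable [CompleteSpace E] {f : E → ℝ} {f' : E → E}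

theorem HasGradientAt.hasDerivAt_add_smul {g a v : E} {t : ℝ}
    (hf : HasGradientAt f g (a + t • v)) :
    HasDerivAt (fun s : ℝ => f (a + s • v)) (inner ℝ g v) t := by
  have hline : HasDerivAt (fun s : ℝ => a + s • v) v t := by
    simpa using ((hasDerivAt_id t).smul_const v).const_add a
  simpa [Function.comp_def] using hf.hasFDerivAt.comp_hasDerivAt t hline

theorem ConvexOn.bregmanDiv_nonneg (hconv : ConvexOn ℝ univ f) {x : E}
    (hf : HasGradientAt f (f' x) x) (y : E) : 0 ≤ bregmanDiv f f' x y := by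
  have hline : ConvexOn ℝ univ (fun t : ℝ => f (x + t • (y - x))) := by
    simpa [Function.comp_def, AffineMap.lineMap_apply, add_comm]
      using hconv.comp_affineMap (AffineMap.lineMap x y)
  have hderiv := (show HasGradientAt f (f' x) (x + (0 : ℝ) • (y - x)) by simpa using hf)
    |>.hasDerivAt_add_smul
  have hslope := hline.le_slope_of_hasDerivAt (mem_univ 0) (mem_univ 1) one_pos hderiv
  simp only [slope_def_field, one_smul, zero_smul, add_zero, add_sub_cancel, sub_zero,
    div_one] at hslope
  unfold bregmanDiv
  linarith

theorem bregmanDiv_le_of_lipschitz {L : ℝ} (hf : ∀ x, HasGradientAt f (f' x) x)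
    (hlip : ∀ x y, ‖f' x - f' y‖ ≤ L * ‖x - y‖) (x y : E) :
    bregmanDiv f f' x y ≤ L / 2 * ‖y - x‖ ^ 2 := by
  set v := y - x with hv
  let φ : ℝ → ℝ := fun t => f (x + t • v) - t * inner ℝ (f' x) v - L / 2 * t ^ 2 * ‖v‖ ^ 2
  have hφ : ∀ t, HasDerivAt φ
      (inner ℝ (f' (x + t • v)) v - inner ℝ (f' x) v - L * t * ‖v‖ ^ 2) t := by
    intro t
    have h := (((hf (x + t • v)).hasDerivAt_add_smul).sub
      ((hasDerivAt_id t).mul_const (inner ℝ (f' x) v))).sub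
      (((hasDerivAt_pow 2 t).const_mul (L / 2)).mul_const (‖v‖ ^ 2))
    exact h.congr_deriv (by push_cast; ring)
  have hφ_nonpos : ∀ t ∈ interior (Ici (0 : ℝ)),
      inner ℝ (f' (x + t • v)) v - inner ℝ (f' x) v - L * t * ‖v‖ ^ 2 ≤ 0 := by
    intro t ht
    rw [interior_Ici, mem_Ioi] at ht
    calc inner ℝ (f' (x + t • v)) v - inner ℝ (f' x) v - L * t * ‖v‖ ^ 2
        = inner ℝ (f' (x + t • v) - f' x) v - L * t * ‖v‖ ^ 2 := by rw [inner_sub_left]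
      _ ≤ ‖f' (x + t • v) - f' x‖ * ‖v‖ - L * t * ‖v‖ ^ 2 := by
          gcongr; exact real_inner_le_norm _ _
      _ ≤ L * ‖(x + t • v) - x‖ * ‖v‖ - L * t * ‖v‖ ^ 2 := by
          gcongr; exact hlip _ _
      _ = 0 := by
          rw [add_sub_cancel_left, norm_smul, Real.norm_of_nonneg ht.le]; ring
  have hanti : AntitoneOn φ (Ici 0) := antitoneOn_of_hasDerivWithinAt_nonpos (convex_Ici 0)
    (fun t _ => (hφ t).continuousAt.continuousWithinAt) (fun t _ => (hφ t).hasDerivWithinAt)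
    hφ_nonpos
  have h01 := hanti (mem_Ici.2 le_rfl) (mem_Ici.2 zero_le_one) zero_le_one
  simp only [φ, hv, one_smul, zero_smul, add_zero, add_sub_cancel, one_mul, one_pow, zero_mul,
    zero_pow two_ne_zero, mul_zero, sub_zero] at h01
  unfold bregmanDiv
  linarith

theorem ConvexOn.sq_norm_sub_div_le_bregmanDiv {L : ℝ} (hL : 0 < L)
    (hconv : ConvexOn ℝ univ f) (hf : ∀ x, HasGradientAt f (f' x) x)
    (hlip : ∀ x y, ‖f' x - f' y‖ ≤ L * ‖x - y‖) (x y : E) :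
    1 / (2 * L) * ‖f' x - f' y‖ ^ 2 ≤ bregmanDiv f f' x y := by
  set d := f' y - f' x
  set z := y - L⁻¹ • d with hz
  have h_tangent := hconv.bregmanDiv_nonneg (hf x) z
  have h_descent := bregmanDiv_le_of_lipschitz hf hlip y z
  have hd : inner ℝ (f' y) d - inner ℝ (f' x) d = ‖d‖ ^ 2 := by
    rw [← inner_sub_left, real_inner_self_eq_norm_sq]
  have hzx : z - x = (y - x) - L⁻¹ • d := by rw [hz]; abel
  have hzy : z - y = -(L⁻¹ • d) := by rw [hz]; abel
  unfold bregmanDiv at *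
  rw [hzx, inner_sub_right, real_inner_smul_right] at h_tangent
  rw [hzy, inner_neg_right, real_inner_smul_right, norm_neg, norm_smul,
    Real.norm_of_nonneg (inv_nonneg.2 hL.le)] at h_descent
  have hL_inv : L * L⁻¹ = 1 := mul_inv_cancel₀ hL.ne'
  rw [norm_sub_rev, show 1 / (2 * L) = L⁻¹ / 2 by field_simp]
  linear_combination h_tangent + h_descent - L⁻¹ * hd + (L⁻¹ * ‖d‖ ^ 2 / 2) * hL_inv

theorem ConvexOn.conj_eq_of_hasGradientAt (hconv : ConvexOn ℝ univ f) {x : E}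
    (hf : HasGradientAt f (f' x) x) :
    conj f (f' x) = ((inner ℝ (f' x) x - f x : ℝ) : EReal) := by
  refine le_antisymm (iSup_le fun y => ?_)
    (le_iSup (fun y => ((inner ℝ (f' x) y - f y : ℝ) : EReal)) x)
  have h := hconv.bregmanDiv_nonneg hf y
  rw [bregmanDiv, inner_sub_right] at h
  exact EReal.coe_le_coe_iff.2 (by linarith)

end Bregman

/-- for a convex L-smooth f, with u = ∇f(x), u₀ = ∇f(x₀),
f*(u), f*(u₀) are finite and
(1/(2L))‖u − u₀‖² ≤ f*(u) − f*(u₀) − ⟨x₀, u − u₀⟩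
  = f(x₀) − f(x) − ⟨∇f(x), x₀ − x⟩ ≤ (L/2)‖x − x₀‖². -/
theorem stmt13 {E : Type*} [NormedAddCommGroup E] [InnerProductSpace ℝ E] [CompleteSpace E]
    (L : ℝ) (hL : 0 < L)
    (f : E → ℝ) (f' : E → E)
    (hconv : ConvexOn ℝ Set.univ f)
    (hgrad : ∀ x, HasGradientAt f (f' x) x)
    (hlip : ∀ x y, ‖f' x - f' y‖ ≤ L * ‖x - y‖)
    (x x₀ : E) (u u₀ : E) (hu : u = f' x) (hu₀ : u₀ = f' x₀) :
    conj f u ≠ ⊤ ∧ conj f u ≠ ⊥ ∧ conj f u₀ ≠ ⊤ ∧ conj f u₀ ≠ ⊥ ∧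
    1 / (2 * L) * ‖u - u₀‖ ^ 2
      ≤ (conj f u).toReal - (conj f u₀).toReal - (inner ℝ x₀ (u - u₀) : ℝ) ∧
    (conj f u).toReal - (conj f u₀).toReal - (inner ℝ x₀ (u - u₀) : ℝ)
      = f x₀ - f x - (inner ℝ (f' x) (x₀ - x) : ℝ) ∧
    f x₀ - f x - (inner ℝ (f' x) (x₀ - x) : ℝ) ≤ L / 2 * ‖x - x₀‖ ^ 2 := by
  subst hu hu₀
  have hconj (a : E) : conj f (f' a) = ((inner ℝ (f' a) a - f a : ℝ) : EReal) :=
    hconv.conj_eq_of_hasGradientAt (hgrad a)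
  have hmid : (conj f (f' x)).toReal - (conj f (f' x₀)).toReal - inner ℝ x₀ (f' x - f' x₀)
      = bregmanDiv f f' x x₀ := by
    rw [hconj, hconj, EReal.toReal_coe, EReal.toReal_coe, bregmanDiv, inner_sub_right,
      inner_sub_right, real_inner_comm x₀ (f' x), real_inner_comm x₀ (f' x₀)]
    ring
  refine ⟨?_, ?_, ?_, ?_, hmid ▸ hconv.sq_norm_sub_div_le_bregmanDiv hL hgrad hlip x x₀, hmid, ?_⟩
  · rw [hconj]; exact EReal.coe_ne_top _
  · rw [hconj]; exact EReal.coe_ne_bot _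
  · rw [hconj]; exact EReal.coe_ne_top _
  · rw [hconj]; exact EReal.coe_ne_bot _
  · rw [norm_sub_rev]
    exact bregmanDiv_le_of_lipschitz hgrad hlip x x₀
end

section
/- Let r : E₁ → ℝ and s : E₂ → ℝ be differentiable and 1-strongly convex. Let F : E₁ → ℝ and H : E₂ → ℝ be convex functions admitting a subgradient at every point, with F relatively μx-strongly convex with respect to V^r and H relatively μy-strongly convex with respect to V^s, where μx, μy > 0. Let A : E₁ → E₂ be bounded linear, define φ(x,y) := F(x) + ⟨y, A x⟩ − H(y), and let (x*, y*) be a saddle point of φ on E₁ × E₂. Let ηx, ηy > 0, θ ≥ 0, αy > 0 satisfy θ ‖A‖/αy ≤ 1/ηx and ‖A‖ αy ≤ 1/ηy. Given points x_k ∈ E₁ and y_{k−1}, y_k ∈ E₂, set ỹ_{k+1} := y_k + θ (y_k − y_{k−1}), and suppose x_{k+1} is a global minimizer of x ↦ ⟨Aᵀ ỹ_{k+1}, x⟩ + (1/ηx) V^r_{x_k}(x) + F(x) and y_{k+1} is a global minimizer of y ↦ −⟨A x_{k+1}, y⟩ + (1/ηy) V^s_{y_k}(y) + H(y). Then: 0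 ≤ φ(x_{k+1}, y*) − φ(x*, y_{k+1}) ≤ (1/ηx) V^r_{x_k}(x*) − (1/ηx + μx) V^r_{x_{k+1}}(x*) + (1/ηy) V^s_{y_k}(y*) − (1/ηy + μy) V^s_{y_{k+1}}(y*) + θ ⟨y_{k−1} − y_k, A(x_k − x*)⟩ − ⟨y_k − y_{k+1}, A(x_{k+1} − x*)⟩ + θ (‖A‖ αy/2) ‖y_k − y_{k−1}‖² − (‖A‖ αy/2) ‖y_{k+1} − y_k‖². -/
/-!
Each update is a mirror prox step. First-order optimality of `x_{k+1}`, together with the convexity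
of `F`, shows that `-(Aᵀ ỹ_{k+1} + (∇r(x_{k+1}) - ∇r(x_k)) / ηx)` is a subgradient of `F` at
`x_{k+1}`; relative strong convexity and the three-point identity of the Bregman divergence then
bound `⟨ỹ_{k+1}, A (x_{k+1} - x*)⟩ + F(x_{k+1}) - F(x*)`, and likewise for the dual step. The sum
of these two bounds differs from the gap by `⟨y_{k+1} - ỹ_{k+1}, A (x_{k+1} - x*)⟩`. Expanding
`ỹ_{k+1}` leaves the cross term `θ ⟨y_{k-1} - y_k, A (x_{k+1} - x_k)⟩`, which Young's inequality
with weight `αy` splits into two squares; the step-size conditions let `V^r_{x_k}(x_{k+1})` and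
`V^s_{y_k}(y_{k+1})`, both at least half the squared distance, absorb them.
-/

/-- Bregman divergence V^r_x(x') = r(x') − r(x) − ⟨∇r(x), x' − x⟩,
given a gradient function `r'` for `r`. -/
noncomputable def breg {E : Type*} [NormedAddCommGroup E] [InnerProductSpace ℝ E]
    (r : E → ℝ) (r' : E → E) (x x' : E) : ℝ :=
  r x' - r x - (inner ℝ (r' x) (x' - x) : ℝ)

open Set AffineMap InnerProductSpace
open scoped RealInnerProductSpace

section

variable {E : Type*} [NormedAddCommGroup E] [InnerProductSpace ℝ E]

theorem IsMinOn.nonneg_of_hasDerivAt_Icc {φ : ℝ → ℝ} {L : ℝ} (hmin : IsMinOn φ (Icc 0 1) 0)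
    (hφ : HasDerivAt φ L 0) : 0 ≤ L := by
  have h1 : (1 : ℝ) ∈ posTangentConeAt (Icc 0 1) 0 := by
    simpa using sub_mem_posTangentConeAt_of_segment_subset (segment_eq_Icc zero_le_one).subset
  simpa using hmin.localize.hasFDerivWithinAt_nonneg hφ.hasFDerivAt.hasFDerivWithinAt h1

theorem HasFDerivAt.hasDerivAt_comp_lineMap {f : E → ℝ} {f' : E →L[ℝ] ℝ} {x : E}
    (hf : HasFDerivAt f f' x) (z : E) :
    HasDerivAt (fun t : ℝ => f (lineMap x z t)) (f' (z - x)) 0 := by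
  rw [← lineMap_apply_zero x z (k := ℝ)] at hf
  exact hf.comp_hasDerivAt (0 : ℝ) hasDerivAt_lineMap

theorem ConvexOn.add_le_of_hasFDerivAt {f : E → ℝ} {f' : E →L[ℝ] ℝ} {x : E}
    (hf : ConvexOn ℝ univ f) (hf' : HasFDerivAt f f' x) (z : E) : f x + f' (z - x) ≤ f z := by
  have h := (hf.comp_affineMap (lineMap x z)).le_slope_of_hasDerivAt (mem_univ 0) (mem_univ 1)
    zero_lt_one (hf'.hasDerivAt_comp_lineMap z)
  simp only [slope, Function.comp_apply, lineMap_apply_zero, lineMap_apply_one, sub_zero,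
    inv_one, one_smul, vsub_eq_sub] at h
  linarith

theorem ConvexOn.sub_le_of_isMinOn_add {F ψ : E → ℝ} {ψ' : E →L[ℝ] ℝ} {x : E}
    (hF : ConvexOn ℝ univ F) (hψ : HasFDerivAt ψ ψ' x) (hmin : ∀ z, F x + ψ x ≤ F z + ψ z)
    (z : E) : F x - ψ' (z - x) ≤ F z := by
  -- `F` restricted to the segment lies below its chord, so `0` minimizes `φ` on `[0, 1]`
  set φ : ℝ → ℝ := fun t => t * (F z - F x) + ψ (lineMap x z t)
  have hφ : HasDerivAt φ (F z - F x + ψ' (z - x)) 0 := by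
    simpa only [one_mul] using (hasDerivAt_id' 0 |>.mul_const (F z - F x)).fun_add
      (hψ.hasDerivAt_comp_lineMap z)
  have hφmin : IsMinOn φ (Icc 0 1) 0 := by
    intro t ht
    have hconv := hF.2 (mem_univ x) (mem_univ z) (sub_nonneg.2 ht.2) ht.1 (sub_add_cancel 1 t)
    have hzt := hmin (lineMap x z t)
    show φ 0 ≤ φ t
    simp only [φ, lineMap_apply_module, smul_eq_mul, zero_mul, zero_add, sub_zero, one_smul,
      zero_smul, add_zero] at hconv hzt ⊢
    linarith
  linarith [hφmin.nonneg_of_hasDerivAt_Icc hφ]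

theorem breg_three_point (r : E → ℝ) (r' : E → E) (a b z : E) :
    ⟪r' b - r' a, z - b⟫ = breg r r' a z - breg r r' a b - breg r r' b z := by
  simp only [breg, inner_sub_left, inner_sub_right]
  ring

theorem hasGradientAt_breg [CompleteSpace E] {r : E → ℝ} {r' : E → E} {x : E}
    (hr : HasGradientAt r (r' x) x) (a : E) : HasGradientAt (breg r r' a) (r' x - r' a) x := by
  rw [hasGradientAt_iff_hasFDerivAt, map_sub]
  have hlin : HasFDerivAt (fun x' => ⟪r' a, x' - a⟫) (toDual ℝ E (r' a)) x :=
    (toDual ℝ E (r' a)).hasFDerivAt.comp x ((hasFDerivAt_id x).sub_const a)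
  exact (hr.hasFDerivAt.sub_const (r a)).sub hlin

theorem half_norm_sub_sq_le_breg [CompleteSpace E] {r : E → ℝ} {r' : E → E} {x : E}
    (hr : HasGradientAt r (r' x) x) (hrsc : ConvexOn ℝ univ (fun x => r x - 1 / 2 * ‖x‖ ^ 2))
    (x' : E) :
    1 / 2 * ‖x' - x‖ ^ 2 ≤ breg r r' x x' := by
  have h := hrsc.add_le_of_hasFDerivAt
    (hr.hasFDerivAt.sub ((hasStrictFDerivAt_norm_sq x).hasFDerivAt.const_mul (1 / 2))) x'
  simp only [sub_apply, smul_apply, toDual_apply_apply, innerSL_apply_apply, smul_eq_mul,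
    nsmul_eq_mul] at h
  rw [norm_sub_sq_real, real_inner_comm]
  simp only [breg, inner_sub_right, real_inner_self_eq_norm_sq] at h ⊢
  linarith

theorem mul_half_norm_sub_sq_le_breg [CompleteSpace E] {r : E → ℝ} {r' : E → E} {x : E}
    (hr : HasGradientAt r (r' x) x) (hrsc : ConvexOn ℝ univ (fun x => r x - 1 / 2 * ‖x‖ ^ 2))
    {κ c : ℝ} (hκ : 0 ≤ κ) (hκc : κ ≤ c) (x' : E) :
    κ / 2 * ‖x' - x‖ ^ 2 ≤ c * breg r r' x x' := by
  have h := half_norm_sub_sq_le_breg hr hrsc x'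
  have hV : 0 ≤ breg r r' x x' := le_trans (by positivity) h
  calc κ / 2 * ‖x' - x‖ ^ 2 = κ * (1 / 2 * ‖x' - x‖ ^ 2) := by ring
    _ ≤ κ * breg r r' x x' := mul_le_mul_of_nonneg_left h hκ
    _ ≤ c * breg r r' x x' := mul_le_mul_of_nonneg_right hκc hV

theorem breg_prox_step_le [CompleteSpace E] {r F : E → ℝ} {r' : E → E} {xk xp : E} {μ : ℝ}
    (hr : HasGradientAt r (r' xp) xp) (hF : ConvexOn ℝ univ F)
    (hrel : ∀ x x' g : E, (∀ z, F x + ⟪g, z - x⟫ ≤ F z) →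
      F x + ⟪g, x' - x⟫ + μ * breg r r' x x' ≤ F x')
    (c : E) (η : ℝ)
    (hmin : ∀ z, ⟪c, xp⟫ + 1 / η * breg r r' xk xp + F xp
      ≤ ⟪c, z⟫ + 1 / η * breg r r' xk z + F z) (z : E) :
    ⟪c, xp - z⟫ + F xp - F z
      ≤ 1 / η * breg r r' xk z - 1 / η * breg r r' xk xp - (1 / η + μ) * breg r r' xp z := by
  have hψ : HasFDerivAt (fun w => ⟪c, w⟫ + 1 / η * breg r r' xk w)
      (toDual ℝ E c + (1 / η) • toDual ℝ E (r' xp - r' xk)) xp :=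
    (toDual ℝ E c).hasFDerivAt.add ((hasGradientAt_breg hr xk).hasFDerivAt.const_mul (1 / η))
  have hsub : ∀ w, F xp + ⟪-(c + (1 / η) • (r' xp - r' xk)), w - xp⟫ ≤ F w := by
    intro w
    have := hF.sub_le_of_isMinOn_add hψ (fun z => by linarith [hmin z]) w
    simp only [add_apply, smul_apply, toDual_apply_apply, smul_eq_mul] at this
    simp only [inner_neg_left, inner_add_left, real_inner_smul_left]
    linarith
  have h := hrel xp z _ hsub
  simp only [inner_neg_left, inner_add_left, real_inner_smul_left,
    breg_three_point r r' xk xp z] at h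
  rw [← neg_sub z xp, inner_neg_right]
  linarith

theorem ContinuousLinearMap.inner_apply_le_young {F : Type*} [NormedAddCommGroup F]
    [InnerProductSpace ℝ F] (A : E →L[ℝ] F) (u : F) (v : E) {α : ℝ} (hα : 0 < α) :
    ⟪u, A v⟫ ≤ ‖A‖ * α / 2 * ‖u‖ ^ 2 + ‖A‖ / α / 2 * ‖v‖ ^ 2 := by
  have hamgm : ‖u‖ * ‖v‖ ≤ α / 2 * ‖u‖ ^ 2 + 1 / α / 2 * ‖v‖ ^ 2 := by
    have hsq : 0 ≤ (α * ‖u‖ - ‖v‖) ^ 2 / (2 * α) := by positivity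
    have hexp : (α * ‖u‖ - ‖v‖) ^ 2 / (2 * α)
        = α / 2 * ‖u‖ ^ 2 + 1 / α / 2 * ‖v‖ ^ 2 - ‖u‖ * ‖v‖ := by field_simp; ring
    linarith
  calc ⟪u, A v⟫ ≤ ‖u‖ * ‖A v‖ := real_inner_le_norm _ _
    _ ≤ ‖u‖ * (‖A‖ * ‖v‖) := by gcongr; exact A.le_opNorm v
    _ = ‖A‖ * (‖u‖ * ‖v‖) := by ring
    _ ≤ ‖A‖ * (α / 2 * ‖u‖ ^ 2 + 1 / α / 2 * ‖v‖ ^ 2) := by gcongr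
    _ = ‖A‖ * α / 2 * ‖u‖ ^ 2 + ‖A‖ / α / 2 * ‖v‖ ^ 2 := by ring

end

theorem stmt18_general {E₁ E₂ : Type*}
    [NormedAddCommGroup E₁] [InnerProductSpace ℝ E₁] [CompleteSpace E₁]
    [NormedAddCommGroup E₂] [InnerProductSpace ℝ E₂] [CompleteSpace E₂]
    (r : E₁ → ℝ) (r' : E₁ → E₁) (s : E₂ → ℝ) (s' : E₂ → E₂)
    (hrgrad : ∀ x, HasGradientAt r (r' x) x)
    (hsgrad : ∀ y, HasGradientAt s (s' y) y)
    (hrsc : ConvexOn ℝ Set.univ (fun x => r x - 1 / 2 * ‖x‖ ^ 2))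
    (hssc : ConvexOn ℝ Set.univ (fun y => s y - 1 / 2 * ‖y‖ ^ 2))
    (F : E₁ → ℝ) (H : E₂ → ℝ) (μx μy : ℝ)
    (hFconv : ConvexOn ℝ Set.univ F) (hHconv : ConvexOn ℝ Set.univ H)
    (hFrel : ∀ x x' : E₁, ∀ g : E₁, (∀ z, F x + (inner ℝ g (z - x) : ℝ) ≤ F z) →
      F x + (inner ℝ g (x' - x) : ℝ) + μx * breg r r' x x' ≤ F x')
    (hHrel : ∀ y y' : E₂, ∀ g : E₂, (∀ z, H y + (inner ℝ g (z - y) : ℝ) ≤ H z) →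
      H y + (inner ℝ g (y' - y) : ℝ) + μy * breg s s' y y' ≤ H y')
    (A : E₁ →L[ℝ] E₂) (xstar : E₁) (ystar : E₂)
    (hsaddle : ∀ (x : E₁) (y : E₂),
      F xstar + (inner ℝ y (A xstar) : ℝ) - H y
          ≤ F xstar + (inner ℝ ystar (A xstar) : ℝ) - H ystar ∧
      F xstar + (inner ℝ ystar (A xstar) : ℝ) - H ystar
          ≤ F x + (inner ℝ ystar (A x) : ℝ) - H ystar)
    (ηx ηy θ αy : ℝ) (hθ : 0 ≤ θ) (hαy : 0 < αy)
    (hcond1 : θ * ‖A‖ / αy ≤ 1 / ηx) (hcond2 : ‖A‖ * αy ≤ 1 / ηy)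
    (xk : E₁) (ykm yk : E₂) (ytil : E₂) (hytil : ytil = yk + θ • (yk - ykm))
    (xkp : E₁) (ykp : E₂)
    (hxmin : ∀ z : E₁,
      (inner ℝ ((ContinuousLinearMap.adjoint A) ytil) xkp : ℝ)
          + 1 / ηx * breg r r' xk xkp + F xkp
        ≤ (inner ℝ ((ContinuousLinearMap.adjoint A) ytil) z : ℝ)
          + 1 / ηx * breg r r' xk z + F z)
    (hymin : ∀ w : E₂,
      -(inner ℝ (A xkp) ykp : ℝ) + 1 / ηy * breg s s' yk ykp + H ykp
        ≤ -(inner ℝ (A xkp) w : ℝ) + 1 / ηy * breg s s' yk w + H w) :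
    0 ≤ (F xkp + (inner ℝ ystar (A xkp) : ℝ) - H ystar)
        - (F xstar + (inner ℝ ykp (A xstar) : ℝ) - H ykp) ∧
    (F xkp + (inner ℝ ystar (A xkp) : ℝ) - H ystar)
        - (F xstar + (inner ℝ ykp (A xstar) : ℝ) - H ykp)
      ≤ 1 / ηx * breg r r' xk xstar - (1 / ηx + μx) * breg r r' xkp xstar
        + 1 / ηy * breg s s' yk ystar - (1 / ηy + μy) * breg s s' ykp ystar
        + θ * (inner ℝ (ykm - yk) (A (xk - xstar)) : ℝ)
        - (inner ℝ (yk - ykp) (A (xkp - xstar)) : ℝ)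
        + θ * (‖A‖ * αy / 2) * ‖yk - ykm‖ ^ 2
        - ‖A‖ * αy / 2 * ‖ykp - yk‖ ^ 2 := by
  refine ⟨by linarith [(hsaddle xkp ykp).1, (hsaddle xkp ykp).2], ?_⟩
  have hprimal := breg_prox_step_le (hrgrad xkp) hFconv hFrel _ ηx hxmin xstar
  have hdual := breg_prox_step_le (hsgrad ykp) hHconv hHrel (-A xkp) ηy
    (by simpa only [inner_neg_left] using hymin) ystar
  rw [ContinuousLinearMap.adjoint_inner_left] at hprimal
  have hyoung := mul_le_mul_of_nonneg_left (A.inner_apply_le_young (ykm - yk) (xkp - xk) hαy) hθ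
  have hVx := mul_half_norm_sub_sq_le_breg (hrgrad xk) hrsc (by positivity) hcond1 xkp
  have hVy := mul_half_norm_sub_sq_le_breg (hsgrad yk) hssc (by positivity) hcond2 ykp
  have hcoupling : ⟪ykp - ytil, A (xkp - xstar)⟫ = θ * ⟪ykm - yk, A (xk - xstar)⟫
      - ⟪yk - ykp, A (xkp - xstar)⟫ + θ * ⟪ykm - yk, A (xkp - xk)⟫ := by
    simp only [hytil, map_sub, inner_sub_left, inner_sub_right, inner_add_left,
      real_inner_smul_left]
    ring
  have hgap : (F xkp + ⟪ystar, A xkp⟫ - H ystar) - (F xstar + ⟪ykp, A xstar⟫ - H ykp)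
      = (⟪ytil, A (xkp - xstar)⟫ + F xkp - F xstar) + (⟪-A xkp, ykp - ystar⟫ + H ykp - H ystar)
        + ⟪ykp - ytil, A (xkp - xstar)⟫ := by
    simp only [map_sub, inner_sub_left, inner_sub_right, inner_neg_left, real_inner_comm (A xkp)]
    ring
  rw [norm_sub_rev ykm yk] at hyoung
  rw [hgap, hcoupling]
  linear_combination hprimal + hdual + hyoung + hVx + hVy

/-- one-step inequality for the primal–dual update with extrapolation. -/
theorem stmt18 {E₁ E₂ : Type*}
    [NormedAddCommGroup E₁] [InnerProductSpace ℝ E₁] [CompleteSpace E₁]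
    [NormedAddCommGroup E₂] [InnerProductSpace ℝ E₂] [CompleteSpace E₂]
    (r : E₁ → ℝ) (r' : E₁ → E₁) (s : E₂ → ℝ) (s' : E₂ → E₂)
    (hrgrad : ∀ x, HasGradientAt r (r' x) x)
    (hsgrad : ∀ y, HasGradientAt s (s' y) y)
    (hrsc : ConvexOn ℝ Set.univ (fun x => r x - 1 / 2 * ‖x‖ ^ 2))
    (hssc : ConvexOn ℝ Set.univ (fun y => s y - 1 / 2 * ‖y‖ ^ 2))
    (F : E₁ → ℝ) (H : E₂ → ℝ) (μx μy : ℝ) (hμx : 0 < μx) (hμy : 0 < μy)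
    (hFconv : ConvexOn ℝ Set.univ F) (hHconv : ConvexOn ℝ Set.univ H)
    (hFsub : ∀ x : E₁, ∃ g : E₁, ∀ z, F x + (inner ℝ g (z - x) : ℝ) ≤ F z)
    (hHsub : ∀ y : E₂, ∃ g : E₂, ∀ z, H y + (inner ℝ g (z - y) : ℝ) ≤ H z)
    (hFrel : ∀ x x' : E₁, ∀ g : E₁, (∀ z, F x + (inner ℝ g (z - x) : ℝ) ≤ F z) →
      F x + (inner ℝ g (x' - x) : ℝ) + μx * breg r r' x x' ≤ F x')
    (hHrel : ∀ y y' : E₂, ∀ g : E₂, (∀ z, H y + (inner ℝ g (z - y) : ℝ) ≤ H z) →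
      H y + (inner ℝ g (y' - y) : ℝ) + μy * breg s s' y y' ≤ H y')
    (A : E₁ →L[ℝ] E₂) (xstar : E₁) (ystar : E₂)
    (hsaddle : ∀ (x : E₁) (y : E₂),
      F xstar + (inner ℝ y (A xstar) : ℝ) - H y
          ≤ F xstar + (inner ℝ ystar (A xstar) : ℝ) - H ystar ∧
      F xstar + (inner ℝ ystar (A xstar) : ℝ) - H ystar
          ≤ F x + (inner ℝ ystar (A x) : ℝ) - H ystar)
    (ηx ηy θ αy : ℝ) (hηx : 0 < ηx) (hηy : 0 < ηy) (hθ : 0 ≤ θ) (hαy : 0 < αy)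
    (hcond1 : θ * ‖A‖ / αy ≤ 1 / ηx) (hcond2 : ‖A‖ * αy ≤ 1 / ηy)
    (xk : E₁) (ykm yk : E₂) (ytil : E₂) (hytil : ytil = yk + θ • (yk - ykm))
    (xkp : E₁) (ykp : E₂)
    (hxmin : ∀ z : E₁,
      (inner ℝ ((ContinuousLinearMap.adjoint A) ytil) xkp : ℝ)
          + 1 / ηx * breg r r' xk xkp + F xkp
        ≤ (inner ℝ ((ContinuousLinearMap.adjoint A) ytil) z : ℝ)
          + 1 / ηx * breg r r' xk z + F z)
    (hymin : ∀ w : E₂,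
      -(inner ℝ (A xkp) ykp : ℝ) + 1 / ηy * breg s s' yk ykp + H ykp
        ≤ -(inner ℝ (A xkp) w : ℝ) + 1 / ηy * breg s s' yk w + H w) :
    0 ≤ (F xkp + (inner ℝ ystar (A xkp) : ℝ) - H ystar)
        - (F xstar + (inner ℝ ykp (A xstar) : ℝ) - H ykp) ∧
    (F xkp + (inner ℝ ystar (A xkp) : ℝ) - H ystar)
        - (F xstar + (inner ℝ ykp (A xstar) : ℝ) - H ykp)
      ≤ 1 / ηx * breg r r' xk xstar - (1 / ηx + μx) * breg r r' xkp xstar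
        + 1 / ηy * breg s s' yk ystar - (1 / ηy + μy) * breg s s' ykp ystar
        + θ * (inner ℝ (ykm - yk) (A (xk - xstar)) : ℝ)
        - (inner ℝ (yk - ykp) (A (xkp - xstar)) : ℝ)
        + θ * (‖A‖ * αy / 2) * ‖yk - ykm‖ ^ 2
        - ‖A‖ * αy / 2 * ‖ykp - yk‖ ^ 2 :=
  stmt18_general r r' s s' hrgrad hsgrad hrsc hssc F H μx μy hFconv hHconv hFrel hHrel A xstar ystar
    hsaddle ηx ηy θ αy hθ hαy hcond1 hcond2 xk ykm yk ytil hytil xkp ykp hxmin hymin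
end
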